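/- arXiv:2109.05600 — 5 statements merged into one kernel-verified Lean document; each statement's English description precedes it below -/
import Mathlib

section
/- For every n ≥ 1, the triple (1, n, 2n+1) is a triangular chord, i.e., there exist three distinct reduced fractions p/q < r/s < u/v with pairwise integer lambda lengths (qr - ps, us - rv, uq - pv) equal to (1, n, 2n+1) in some order. -/
/-- A triple of integers is a triangular chord if it arises as the multiset of
pairwise Farey lambda lengths (qr - ps, us - rv, uq - pv) of three distinct
reduced fractions p/q < r/s < u/v. -/
def IsTriangularChord (A B C : ℤ) : Prop :=
  ∃ p q r s u v : ℤ, 0 < q ∧ 0 < s ∧ 0 < v ∧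
    IsCoprime p q ∧ IsCoprime r s ∧ IsCoprime u v ∧
    (p : ℚ) / q < (r : ℚ) / s ∧ (r : ℚ) / s < (u : ℚ) / v ∧
    ({q * r - p * s, u * s - r * v, u * q - p * v} : Multiset ℤ) = {A, B, C}

/-- The chord of the fractions `0/1 < 1/1 < u/v`. -/
theorem isTriangularChord_one_sub_self {u v : ℤ} (hv : 0 < v) (hvu : v < u)
    (huv : IsCoprime u v) : IsTriangularChord 1 (u - v) u := by
  refine ⟨0, 1, 1, 1, u, v, one_pos, one_pos, hv, isCoprime_zero_left.2 isUnit_one,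
    isCoprime_one_left, huv, by norm_num, ?_, by simp⟩
  rw [Int.cast_one, div_one, one_lt_div (by exact_mod_cast hv)]
  exact_mod_cast hvu

/-- For every n ≥ 1, the triple (1, n, 2n+1) is a triangular chord. -/
theorem chord_one_n_two_n_succ (n : ℤ) (hn : 1 ≤ n) :
    IsTriangularChord 1 n (2 * n + 1) := by
  have hcop : IsCoprime (2 * n + 1) (n + 1) := ⟨-1, 2, by ring⟩
  have h := isTriangularChord_one_sub_self (by omega) (by omega) hcop
  rwa [show 2 * n + 1 - (n + 1) = n by ring] at h
end

section
/- If (A, B, C) is a triangular chord, i.e., A = qr - ps, B = us - rv, C = uq - pv for reduced fractions p/q < r/s < u/v, then gcd(A, B) divides C, gcd(B, C) divides A, and gcd(A, C) divides B. -/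
/-!
Expanding the definitions gives the identities `r C = u A + p B` and `s C = v A + q B`, so any
common divisor of two of `A, B, C` divides both `x t` and `y t` for the third one `t`, where
`(x, y)` is one of the coprime pairs `(r, s)`, `(u, v)`, `(p, q)`. A Bézout relation for `(x, y)`
then shows that it divides `t`.
-/

namespace IsCoprime

variable {R : Type*} [CommSemiring R] {g x y c : R}

theorem dvd_of_dvd_mul_of_dvd_mul (hxy : IsCoprime x y) (hx : g ∣ x * c) (hy : g ∣ y * c) :
    g ∣ c := by
  obtain ⟨a, b, hab⟩ := hxy
  simpa only [← mul_assoc, ← add_mul, hab, one_mul] using hx.linear_comb hy a b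

theorem dvd_of_mul_eq_linear_comb {a b m n m' n' : R} (hxy : IsCoprime x y)
    (ha : g ∣ a) (hb : g ∣ b) (hx : x * c = m * a + n * b) (hy : y * c = m' * a + n' * b) :
    g ∣ c :=
  hxy.dvd_of_dvd_mul_of_dvd_mul (hx ▸ ha.linear_comb hb m n) (hy ▸ ha.linear_comb hb m' n')

end IsCoprime

theorem chord_gcd_condition_general
    (p q r s u v A B C : ℤ)
    (hpq : IsCoprime p q) (hrs : IsCoprime r s) (huv : IsCoprime u v)
    (hA : A = q * r - p * s) (hB : B = u * s - r * v) (hC : C = u * q - p * v) :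
    (Int.gcd A B : ℤ) ∣ C ∧ (Int.gcd B C : ℤ) ∣ A ∧ (Int.gcd A C : ℤ) ∣ B := by
  have hrC : r * C = u * A + p * B := by subst hA hB hC; ring
  have hsC : s * C = v * A + q * B := by subst hA hB hC; ring
  have huA : u * A = r * C + -p * B := by linear_combination -hrC
  have hvA : v * A = s * C + -q * B := by linear_combination -hsC
  have hpB : p * B = r * C + -u * A := by linear_combination -hrC
  have hqB : q * B = s * C + -v * A := by linear_combination -hsC
  refine ⟨?_, ?_, ?_⟩
  · exact hrs.dvd_of_mul_eq_linear_comb (Int.gcd_dvd_left A B) (Int.gcd_dvd_right A B) hrC hsC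
  · exact huv.dvd_of_mul_eq_linear_comb (Int.gcd_dvd_right B C) (Int.gcd_dvd_left B C) huA hvA
  · exact hpq.dvd_of_mul_eq_linear_comb (Int.gcd_dvd_right A C) (Int.gcd_dvd_left A C) hpB hqB

/-- For a triangular chord A = qr - ps, B = us - rv, C = uq - pv
arising from reduced fractions p/q < r/s < u/v, the gcd of any two of A, B, C
divides the third. -/
theorem chord_gcd_condition
    (p q r s u v A B C : ℤ) (hq : 0 < q) (hs : 0 < s) (hv : 0 < v)
    (hpq : IsCoprime p q) (hrs : IsCoprime r s) (huv : IsCoprime u v)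
    (h1 : (p : ℚ) / q < (r : ℚ) / s) (h2 : (r : ℚ) / s < (u : ℚ) / v)
    (hA : A = q * r - p * s) (hB : B = u * s - r * v) (hC : C = u * q - p * v) :
    (Int.gcd A B : ℤ) ∣ C ∧ (Int.gcd B C : ℤ) ∣ A ∧ (Int.gcd A C : ℤ) ∣ B :=
  chord_gcd_condition_general p q r s u v A B C hpq hrs huv hA hB hC
end

section
/- If (A, B, C) is a triangular chord with n = gcd(A, B, C) even, then at least one of A/n, B/n, C/n is even. -/
lemma ZMod.eq_of_isCoprime_of_mul_eq_mul {p q u v : ZMod 2} (hpq : IsCoprime p q)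
    (huv : IsCoprime u v) (h : u * q = p * v) : u = p ∧ v = q := by
  revert p q u v
  unfold IsCoprime
  decide

lemma cramer_identity {R : Type*} [CommRing R] (p q r s u v : R) :
    (q * r - p * s) * u + (u * s - r * v) * p = (u * q - p * v) * r ∧
      (q * r - p * s) * v + (u * s - r * v) * q = (u * q - p * v) * s :=
  ⟨by ring, by ring⟩

lemma odd_det_of_odd_combination {p q r s u v a b c : ℤ} (hpq : IsCoprime p q)
    (hrs : IsCoprime r s) (huv : IsCoprime u v) (ha : Odd a) (hb : Odd b) (hc : Odd c)
    (hr : a * u + b * p = c * r) (hs : a * v + b * q = c * s) : Odd (u * q - p * v) := by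
  rw [← ZMod.intCast_eq_one_iff_odd] at ha hb hc
  rw [← Int.not_even_iff_odd, ← ZMod.intCast_eq_zero_iff_even]
  have hr2 := congrArg (Int.cast : ℤ → ZMod 2) hr
  have hs2 := congrArg (Int.cast : ℤ → ZMod 2) hs
  push_cast [ha, hb, hc, one_mul] at hr2 hs2 ⊢
  intro hdet
  obtain ⟨hup, hvq⟩ := ZMod.eq_of_isCoprime_of_mul_eq_mul hpq.intCast huv.intCast
    (sub_eq_zero.mp hdet)
  have hR : IsCoprime (r : ZMod 2) s := hrs.intCast
  rw [← hr2, ← hs2, hup, hvq, CharTwo.add_self_eq_zero, CharTwo.add_self_eq_zero] at hR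
  exact not_isCoprime_zero_zero hR

lemma two_dvd_det_div_of_two_dvd {p q r s u v n : ℤ} (hpq : IsCoprime p q)
    (hrs : IsCoprime r s) (huv : IsCoprime u v) (hn : 2 ∣ n) (hX : n ∣ q * r - p * s)
    (hY : n ∣ u * s - r * v) (hZ : n ∣ u * q - p * v) :
    2 ∣ (q * r - p * s) / n ∨ 2 ∣ (u * s - r * v) / n ∨ 2 ∣ (u * q - p * v) / n := by
  rcases eq_or_ne n 0 with rfl | hn0
  · simp
  obtain ⟨a, ha⟩ := hX
  obtain ⟨b, hb⟩ := hY
  obtain ⟨c, hc⟩ := hZ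
  have hcramer := cramer_identity p q r s u v
  rw [ha, hb, hc] at hcramer ⊢
  simp only [Int.mul_ediv_cancel_left _ hn0, ← even_iff_two_dvd]
  by_contra! hodd
  simp only [Int.not_even_iff_odd] at hodd
  have hr : a * u + b * p = c * r := mul_left_cancel₀ hn0 (by linear_combination hcramer.1)
  have hs : a * v + b * q = c * s := mul_left_cancel₀ hn0 (by linear_combination hcramer.2)
  have hdet := odd_det_of_odd_combination hpq hrs huv hodd.1 hodd.2.1 hodd.2.2 hr hs
  rw [hc, Int.odd_mul] at hdet
  exact Int.not_even_iff_odd.mpr hdet.1 (even_iff_two_dvd.mpr hn)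

/-- If (A,B,C) is a triangular chord whose gcd n = gcd(A,B,C) is even,
then at least one of A/n, B/n, C/n is even. -/
theorem chord_parity (A B C : ℤ) (h : IsTriangularChord A B C)
    (n : ℤ) (hn : n = Int.gcd A (Int.gcd B C)) (heven : 2 ∣ n) :
    2 ∣ A / n ∨ 2 ∣ B / n ∨ 2 ∣ C / n := by
  obtain ⟨p, q, r, s, u, v, -, -, -, hpq, hrs, huv, -, -, hXYZ⟩ := h
  have hdvd : ∀ W ∈ ({A, B, C} : Multiset ℤ), n ∣ W := by
    simp only [Multiset.insert_eq_cons, Multiset.mem_cons, Multiset.mem_singleton]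
    rintro W (rfl | rfl | rfl) <;> subst hn
    · exact Int.gcd_dvd_left _ _
    · exact (Int.gcd_dvd_right _ _).trans (Int.gcd_dvd_left _ _)
    · exact (Int.gcd_dvd_right _ _).trans (Int.gcd_dvd_right _ _)
  suffices ∃ W ∈ ({A, B, C} : Multiset ℤ), 2 ∣ W / n by simpa using this
  rw [← hXYZ] at hdvd ⊢
  simp only [Multiset.insert_eq_cons, Multiset.mem_cons, Multiset.mem_singleton,
    forall_eq_or_imp, forall_eq, exists_eq_or_imp, exists_eq_left] at hdvd ⊢
  exact two_dvd_det_div_of_two_dvd hpq hrs huv heven hdvd.1 hdvd.2.1 hdvd.2.2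
end

section
/- A triple of positive integers (A, B, C) is a triangular chord if and only if (1) for every permutation {i,j,k} of the indices, gcd of the i-th and j-th entries divides the k-th entry, and (2) if n = gcd(A,B,C) is even, then at least one of A/n, B/n, C/n is even. -/
open Polynomial

def ChordConditions (A B C : ℤ) : Prop :=
  ((Int.gcd A B : ℤ) ∣ C ∧ (Int.gcd B C : ℤ) ∣ A ∧ (Int.gcd A C : ℤ) ∣ B) ∧
    (2 ∣ (Int.gcd A (Int.gcd B C) : ℤ) →
      2 ∣ A / (Int.gcd A (Int.gcd B C) : ℤ) ∨
      2 ∣ B / (Int.gcd A (Int.gcd B C) : ℤ) ∨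
      2 ∣ C / (Int.gcd A (Int.gcd B C) : ℤ))

namespace ChordConditions

variable {A B C : ℤ}

theorem swap₁₂ (h : ChordConditions A B C) : ChordConditions B A C := by
  obtain ⟨⟨hAB, hBC, hAC⟩, hpar⟩ := h
  refine ⟨⟨Int.gcd_comm A B ▸ hAB, hAC, hBC⟩, ?_⟩
  rw [Int.gcd_left_comm]
  tauto

theorem swap₂₃ (h : ChordConditions A B C) : ChordConditions A C B := by
  obtain ⟨⟨hAB, hBC, hAC⟩, hpar⟩ := h
  refine ⟨⟨hAC, Int.gcd_comm B C ▸ hBC, hAB⟩, ?_⟩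
  rw [Int.gcd_comm C B]
  tauto

end ChordConditions

theorem of_multiset_triple_eq {α : Type*} {P : α → α → α → Prop}
    (swap₁₂ : ∀ {a b c}, P a b c → P b a c) (swap₂₃ : ∀ {a b c}, P a b c → P a c b)
    {a b c x y z : α} (h : ({x, y, z} : Multiset α) = {a, b, c}) (hP : P x y z) : P a b c := by
  have : [a, b, c] ∈ List.permutations' [x, y, z] :=
    List.mem_permutations'.mpr (Multiset.coe_eq_coe.mp h).symm
  simp only [List.permutations', List.permutations'Aux, List.flatMap_cons, List.flatMap_nil,
    List.append_nil, List.map_cons, List.map_nil, List.cons_append, List.nil_append,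
    List.mem_cons, List.cons.injEq, and_true, List.not_mem_nil, or_false] at this
  rcases this with ⟨rfl, rfl, rfl⟩ | ⟨rfl, rfl, rfl⟩ | ⟨rfl, rfl, rfl⟩ | ⟨rfl, rfl, rfl⟩ |
    ⟨rfl, rfl, rfl⟩ | ⟨rfl, rfl, rfl⟩
  exacts [hP, swap₁₂ hP, swap₂₃ (swap₁₂ hP), swap₂₃ hP, swap₁₂ (swap₂₃ hP),
    swap₁₂ (swap₂₃ (swap₁₂ hP))]

theorem dvd_of_dvd_mul_of_isCoprime {d z r s : ℤ} (hrs : IsCoprime r s) (hr : d ∣ r * z)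
    (hs : d ∣ s * z) : d ∣ z := by
  obtain ⟨α, β, h⟩ := hrs
  have hz : z = α * (r * z) + β * (s * z) := by linear_combination (-z) * h
  exact hz ▸ hr.linear_comb hs α β

-- `h₁, h₂` say `x • (u, v) + y • (p, q) = z • (r, s)`, the relation between the three 2 × 2 minors
-- `x, y, z` of the vectors `(p, q), (r, s), (u, v)`.
theorem gcd_dvd_of_plucker {p q r s u v x y z : ℤ} (hpq : IsCoprime p q) (hrs : IsCoprime r s)
    (huv : IsCoprime u v) (h₁ : u * x + p * y = r * z) (h₂ : v * x + q * y = s * z) :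
    (Int.gcd x y : ℤ) ∣ z ∧ (Int.gcd y z : ℤ) ∣ x ∧ (Int.gcd x z : ℤ) ∣ y := by
  refine ⟨?_, ?_, ?_⟩
  · have hx := Int.gcd_dvd_left x y
    have hy := Int.gcd_dvd_right x y
    exact dvd_of_dvd_mul_of_isCoprime hrs
      (by rw [← h₁]; exact hx.linear_comb hy u p)
      (by rw [← h₂]; exact hx.linear_comb hy v q)
  · have hy := Int.gcd_dvd_left y z
    have hz := Int.gcd_dvd_right y z
    exact dvd_of_dvd_mul_of_isCoprime huv
      (by rw [show u * x = r * z + (-p) * y by linear_combination h₁]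
          exact hz.linear_comb hy r (-p))
      (by rw [show v * x = s * z + (-q) * y by linear_combination h₂]
          exact hz.linear_comb hy s (-q))
  · have hx := Int.gcd_dvd_left x z
    have hz := Int.gcd_dvd_right x z
    exact dvd_of_dvd_mul_of_isCoprime hpq
      (by rw [show p * y = r * z + (-u) * x by linear_combination h₁]
          exact hz.linear_comb hx r (-u))
      (by rw [show q * y = s * z + (-v) * x by linear_combination h₂]
          exact hz.linear_comb hx s (-v))

-- Pairwise proportional nonzero vectors of `𝔽₂²` are equal, so the last two relations force
-- `(r, s) = 0`.
theorem ZMod.two_plucker_absurd : ∀ p q r s u v : ZMod 2,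
    ¬(p = 0 ∧ q = 0) → ¬(r = 0 ∧ s = 0) → ¬(u = 0 ∧ v = 0) →
    q * r = p * s → u * s = r * v → u * q = p * v → v + q = s → u + p ≠ r := by
  decide

theorem IsCoprime.intCast_zmod_two_ne_zero {p q : ℤ} (h : IsCoprime p q) :
    ¬((p : ZMod 2) = 0 ∧ (q : ZMod 2) = 0) := by
  rintro ⟨hp, hq⟩
  have := h.map (Int.castRingHom (ZMod 2))
  simp only [eq_intCast] at this
  rw [hp, hq, isCoprime_zero_left] at this
  exact not_isUnit_zero this

theorem two_dvd_div_gcd_of_fractions {p q r s u v x y z : ℤ} (hpq : IsCoprime p q)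
    (hrs : IsCoprime r s) (huv : IsCoprime u v)
    (hx : x = q * r - p * s) (hy : y = u * s - r * v) (hz : z = u * q - p * v) :
    2 ∣ (Int.gcd x (Int.gcd y z) : ℤ) →
      2 ∣ x / (Int.gcd x (Int.gcd y z) : ℤ) ∨ 2 ∣ y / (Int.gcd x (Int.gcd y z) : ℤ) ∨
        2 ∣ z / (Int.gcd x (Int.gcd y z) : ℤ) := by
  set n := (Int.gcd x (Int.gcd y z) : ℤ)
  intro h2n
  obtain ⟨x', hx'⟩ : n ∣ x := Int.gcd_dvd_left _ _
  obtain ⟨y', hy'⟩ : n ∣ y := (Int.gcd_dvd_right _ _).trans (Int.gcd_dvd_left _ _)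
  obtain ⟨z', hz'⟩ : n ∣ z := (Int.gcd_dvd_right _ _).trans (Int.gcd_dvd_right _ _)
  rcases eq_or_ne n 0 with hn0 | hn0
  · simp [hn0]
  rw [hx', hy', hz', Int.mul_ediv_cancel_left _ hn0, Int.mul_ediv_cancel_left _ hn0,
    Int.mul_ediv_cancel_left _ hn0]
  by_contra! hodd
  simp only [← even_iff_two_dvd, Int.not_even_iff_odd, ← ZMod.intCast_eq_one_iff_odd] at hodd
  obtain ⟨hx₁, hy₁, hz₁⟩ := hodd
  have h₁ : u * x' + p * y' = r * z' := mul_left_cancel₀ hn0 (by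
    linear_combination (-u) * hx' - p * hy' + r * hz' + u * hx + p * hy - r * hz)
  have h₂ : v * x' + q * y' = s * z' := mul_left_cancel₀ hn0 (by
    linear_combination (-v) * hx' - q * hy' + s * hz' + v * hx + q * hy - s * hz)
  have hev : ∀ w : ℤ, n ∣ w → (w : ZMod 2) = 0 := fun w hw =>
    (ZMod.intCast_zmod_eq_zero_iff_dvd w 2).mpr (h2n.trans hw)
  have hx₀ : ((q * r - p * s : ℤ) : ZMod 2) = 0 := hx ▸ hev x ⟨x', hx'⟩
  have hy₀ : ((u * s - r * v : ℤ) : ZMod 2) = 0 := hy ▸ hev y ⟨y', hy'⟩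
  have hz₀ : ((u * q - p * v : ℤ) : ZMod 2) = 0 := hz ▸ hev z ⟨z', hz'⟩
  have h₁' := congrArg (Int.cast : ℤ → ZMod 2) h₁
  have h₂' := congrArg (Int.cast : ℤ → ZMod 2) h₂
  push_cast at hx₀ hy₀ hz₀ h₁' h₂'
  rw [hx₁, hy₁, hz₁] at h₁' h₂'
  exact ZMod.two_plucker_absurd p q r s u v hpq.intCast_zmod_two_ne_zero
    hrs.intCast_zmod_two_ne_zero huv.intCast_zmod_two_ne_zero (sub_eq_zero.mp hx₀)
    (sub_eq_zero.mp hy₀) (sub_eq_zero.mp hz₀) (by linear_combination h₂')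
    (by linear_combination h₁')

theorem chordConditions_of_fractions {p q r s u v : ℤ} (hpq : IsCoprime p q)
    (hrs : IsCoprime r s) (huv : IsCoprime u v) :
    ChordConditions (q * r - p * s) (u * s - r * v) (u * q - p * v) :=
  ⟨gcd_dvd_of_plucker hpq hrs huv (by ring) (by ring),
    two_dvd_div_gcd_of_fractions hpq hrs huv rfl rfl rfl⟩

theorem exists_mul_affine_ne_zero_of_two_lt_card {F : Type*} [Field F] [Fintype F]
    (hF : 2 < Fintype.card F) {a c s₀ v₀ : F} (hs : s₀ ≠ 0 ∨ a ≠ 0) (hv : v₀ ≠ 0 ∨ c ≠ 0) :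
    ∃ τ, (s₀ + a * τ) * (v₀ + c * τ) ≠ 0 := by
  classical
  have root_eq {α β τ : F} (h : α ≠ 0 ∨ β ≠ 0) (h0 : α + β * τ = 0) : τ = -α / β := by
    have hβ : β ≠ 0 := fun hβ => by simp_all
    field_simp
    linear_combination h0
  obtain ⟨τ, -, hτ⟩ := Finset.exists_mem_notMem_of_card_lt_card
    (Finset.card_le_two.trans_lt (hF.trans_eq Finset.card_univ.symm) :
      ({-s₀ / a, -v₀ / c} : Finset F).card < Finset.univ.card)
  refine ⟨τ, mul_ne_zero (fun h0 => hτ ?_) (fun h0 => hτ ?_)⟩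
  · simp [root_eq hs h0]
  · simp [root_eq hv h0]

theorem ZMod.two_exists_mul_affine_ne_zero : ∀ a b c s₀ v₀ : ZMod 2, c * s₀ - a * v₀ = b →
    (a = 0 → b ≠ 0) → (c = 0 → b ≠ 0) → (a = 0 ∨ b = 0 ∨ c = 0) →
    ∃ τ, (s₀ + a * τ) * (v₀ + c * τ) ≠ 0 := by
  decide

theorem exists_not_dvd_mul_affine {p : ℕ} (hp : p.Prime) {a b c s₀ v₀ : ℤ}
    (h : c * s₀ - a * v₀ = b) (ha : (p : ℤ) ∣ a → ¬(p : ℤ) ∣ b) (hc : (p : ℤ) ∣ c → ¬(p : ℤ) ∣ b)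
    (h₂ : p = 2 → 2 ∣ a ∨ 2 ∣ b ∨ 2 ∣ c) :
    ∃ t : ℤ, ¬(p : ℤ) ∣ (s₀ + a * t) * (v₀ + c * t) := by
  have : Fact p.Prime := ⟨hp⟩
  simp only [← ZMod.intCast_zmod_eq_zero_iff_dvd] at ha hc ⊢
  have h' : (c : ZMod p) * s₀ - a * v₀ = b := by
    exact_mod_cast congrArg (Int.cast : ℤ → ZMod p) h
  suffices ∃ τ : ZMod p, ((s₀ : ZMod p) + a * τ) * (v₀ + c * τ) ≠ 0 by
    obtain ⟨τ, hτ⟩ := this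
    obtain ⟨t, rfl⟩ := ZMod.intCast_surjective τ
    exact ⟨t, by push_cast; exact hτ⟩
  rcases eq_or_ne p 2 with rfl | hp₂
  · refine ZMod.two_exists_mul_affine_ne_zero _ _ _ _ _ h' ha hc ?_
    simpa [ZMod.intCast_zmod_eq_zero_iff_dvd] using h₂ rfl
  · refine exists_mul_affine_ne_zero_of_two_lt_card ?_ ?_ ?_
    · rw [ZMod.card]; exact lt_of_le_of_ne hp.two_le (Ne.symm hp₂)
    · by_contra! h0
      exact ha h0.2 (by rw [← h', h0.1, h0.2]; ring)
    · by_contra! h0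
      exact hc h0.2 (by rw [← h', h0.1, h0.2]; ring)

namespace Polynomial

theorem isCoprime_eval_of_dvd_sub {f : ℤ[X]} {m t t' : ℤ} (h : IsCoprime (f.eval t) m)
    (hm : m ∣ t' - t) : IsCoprime (f.eval t') m := by
  obtain ⟨k, hk⟩ := hm.trans (sub_dvd_eval_sub t' t f)
  rw [show f.eval t' = f.eval t + m * k by linear_combination hk]
  exact h.add_mul_left_left k

theorem exists_isCoprime_eval (f : ℤ[X]) {N : ℕ} (hN : N ≠ 0)
    (h : ∀ p, p.Prime → p ∣ N → ∃ t, ¬(p : ℤ) ∣ f.eval t) : ∃ t, IsCoprime (f.eval t) N := by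
  induction N using Nat.recOnPosPrimePosCoprime with
  | prime_pow p n hp hn =>
    obtain ⟨t, ht⟩ := h p hp (dvd_pow_self p hn.ne')
    refine ⟨t, ?_⟩
    push_cast
    exact ((Nat.prime_iff_prime_int.mp hp).coprime_iff_not_dvd.mpr ht).symm.pow_right
  | zero => exact absurd rfl hN
  | one => exact ⟨0, by exact_mod_cast isCoprime_one_right⟩
  | coprime a b _ _ hab iha ihb =>
    obtain ⟨t₁, ht₁⟩ := iha (left_ne_zero_of_mul hN) fun p hp hpa => h p hp (hpa.mul_right b)
    obtain ⟨t₂, ht₂⟩ := ihb (right_ne_zero_of_mul hN) fun p hp hpb => h p hp (hpb.mul_left a)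
    obtain ⟨α, β, hαβ⟩ := hab.isCoprime
    refine ⟨t₁ * (β * b) + t₂ * (α * a), ?_⟩
    push_cast
    exact IsCoprime.mul_right
      (isCoprime_eval_of_dvd_sub ht₁ ⟨(t₂ - t₁) * α, by linear_combination t₁ * hαβ⟩)
      (isCoprime_eval_of_dvd_sub ht₂ ⟨(t₁ - t₂) * β, by linear_combination t₂ * hαβ⟩)

theorem exists_le_isCoprime_eval (f : ℤ[X]) {N : ℕ} (hN : N ≠ 0)
    (h : ∀ p, p.Prime → p ∣ N → ∃ t, ¬(p : ℤ) ∣ f.eval t) (T : ℤ) :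
    ∃ t, T ≤ t ∧ IsCoprime (f.eval t) N := by
  obtain ⟨t₀, ht₀⟩ := exists_isCoprime_eval f hN h
  have hN₁ : (1 : ℤ) ≤ N := by exact_mod_cast Nat.one_le_iff_ne_zero.mpr hN
  refine ⟨t₀ + N * |T - t₀|, ?_, isCoprime_eval_of_dvd_sub ht₀ ⟨|T - t₀|, by ring⟩⟩
  nlinarith [le_abs_self (T - t₀), abs_nonneg (T - t₀)]

end Polynomial

theorem exists_pos_solution_isCoprime {a b c : ℤ} {N : ℕ} (hN : N ≠ 0) (ha : 0 < a) (hc : 0 < c)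
    (hac : IsCoprime a c) (hab : ∀ p : ℕ, p.Prime → (p : ℤ) ∣ a → ¬(p : ℤ) ∣ b)
    (hcb : ∀ p : ℕ, p.Prime → (p : ℤ) ∣ c → ¬(p : ℤ) ∣ b)
    (h₂ : 2 ∣ (N : ℤ) → 2 ∣ a ∨ 2 ∣ b ∨ 2 ∣ c) :
    ∃ s v : ℤ, 0 < s ∧ 0 < v ∧ c * s - a * v = b ∧ IsCoprime s N ∧ IsCoprime v N := by
  obtain ⟨α, β, hαβ⟩ := hac
  set s₀ := β * b
  set v₀ := -(α * b)
  have h₀ : c * s₀ - a * v₀ = b := by linear_combination b * hαβ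
  let f : ℤ[X] := (C s₀ + C a * X) * (C v₀ + C c * X)
  have hf (t : ℤ) : f.eval t = (s₀ + a * t) * (v₀ + c * t) := by simp [f]
  obtain ⟨t, ht, hcop⟩ := f.exists_le_isCoprime_eval hN (fun p hp hpN => by
    simpa only [hf] using exists_not_dvd_mul_affine hp h₀ (hab p hp) (hcb p hp)
      (fun hp₂ => h₂ (by subst hp₂; exact_mod_cast hpN))) (|s₀| + |v₀| + 1)
  rw [hf] at hcop
  have ht₀ : 0 ≤ t := by linarith [abs_nonneg s₀, abs_nonneg v₀]
  refine ⟨s₀ + a * t, v₀ + c * t, ?_, ?_, by linear_combination h₀, hcop.of_mul_left_left,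
    hcop.of_mul_left_right⟩
  · nlinarith [neg_abs_le s₀, abs_nonneg v₀, le_mul_of_one_le_left ht₀ ha]
  · nlinarith [neg_abs_le v₀, abs_nonneg s₀, le_mul_of_one_le_left ht₀ hc]

theorem isCoprime_of_gcd_dvd {A B C s v : ℤ} (hB : C * s - A * v = B)
    (hAB : (Int.gcd A B : ℤ) ∣ C) (hs : IsCoprime s (Int.gcd A C)) : IsCoprime A s := by
  rw [Int.isCoprime_iff_gcd_eq_one]
  have hA := Int.gcd_dvd_left A s
  have hs' := Int.gcd_dvd_right A s
  have hC := (Int.dvd_coe_gcd hA (hB ▸ (hs'.mul_left C).sub (hA.mul_right v))).trans hAB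
  exact Nat.isUnit_iff.mp (Int.ofNat_isUnit.mp (hs.isUnit_of_dvd' hs' (Int.dvd_coe_gcd hA hC)))

theorem isTriangularChord_of_solution {A B C s v : ℤ} (hA : 0 < A) (hB : 0 < B) (hs : 0 < s)
    (hv : 0 < v) (hAs : IsCoprime A s) (hCv : IsCoprime C v) (hsv : C * s - A * v = B) :
    IsTriangularChord A B C := by
  refine ⟨0, 1, A, s, C, v, one_pos, hs, hv, isCoprime_zero_left.mpr isUnit_one, hAs, hCv,
    ?_, ?_, by simp [hsv]⟩
  · rw [Int.cast_zero, zero_div]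
    exact div_pos (by exact_mod_cast hA) (by exact_mod_cast hs)
  rw [div_lt_div_iff₀ (by exact_mod_cast hs) (by exact_mod_cast hv)]
  exact_mod_cast (by linarith : A * v < C * s)

theorem not_dvd_of_gcd_mul_dvd {G a b c p : ℤ} (hG : G ≠ 0) (hp : Prime p) (hac : IsCoprime a c)
    (h : (Int.gcd (G * a) (G * b) : ℤ) ∣ G * c) (hpa : p ∣ a) : ¬p ∣ b := fun hpb =>
  hp.not_isUnit <| hac.isUnit_of_dvd' hpa <| (mul_dvd_mul_iff_left hG).mp <|
    (Int.dvd_coe_gcd (mul_dvd_mul_left G hpa) (mul_dvd_mul_left G hpb)).trans h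

theorem isTriangularChord_of_gcd_dvd {A B C : ℤ} (hA : 0 < A) (hB : 0 < B) (hC : 0 < C)
    (hAB : (Int.gcd A B : ℤ) ∣ C) (hBC : (Int.gcd B C : ℤ) ∣ A) (hAC : (Int.gcd A C : ℤ) ∣ B)
    (hpar : 2 ∣ (Int.gcd A C : ℤ) →
      2 ∣ A / (Int.gcd A C : ℤ) ∨ 2 ∣ B / (Int.gcd A C : ℤ) ∨ 2 ∣ C / (Int.gcd A C : ℤ)) :
    IsTriangularChord A B C := by
  set N := Int.gcd A C
  have hN : 0 < N := Int.gcd_pos_of_ne_zero_left C hA.ne'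
  have hN₀ : (N : ℤ) ≠ 0 := by positivity
  have hA' : A = N * (A / N) := (Int.mul_ediv_cancel' (Int.gcd_dvd_left A C)).symm
  have hB' : B = N * (B / N) := (Int.mul_ediv_cancel' hAC).symm
  have hC' : C = N * (C / N) := (Int.mul_ediv_cancel' (Int.gcd_dvd_right A C)).symm
  have hac : IsCoprime (A / N) (C / N) :=
    Int.isCoprime_iff_gcd_eq_one.mpr (Int.gcd_div_gcd_div_gcd hN)
  have hAB' : (Int.gcd (N * (A / N)) (N * (B / N)) : ℤ) ∣ N * (C / N) := by
    rwa [← hA', ← hB', ← hC']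
  have hCB' : (Int.gcd (N * (C / N)) (N * (B / N)) : ℤ) ∣ N * (A / N) := by
    rwa [← hA', ← hB', ← hC', Int.gcd_comm]
  obtain ⟨s, v, hs, hv, hsv, hsN, hvN⟩ := exists_pos_solution_isCoprime hN.ne'
    (pos_of_mul_pos_right (hA' ▸ hA) (by positivity))
    (pos_of_mul_pos_right (hC' ▸ hC) (by positivity)) hac
    (fun p hp => not_dvd_of_gcd_mul_dvd hN₀ (Nat.prime_iff_prime_int.mp hp) hac hAB')
    (fun p hp => not_dvd_of_gcd_mul_dvd hN₀ (Nat.prime_iff_prime_int.mp hp) hac.symm hCB') hpar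
  have hsv' : C * s - A * v = B := by rw [hA', hB', hC']; linear_combination (N : ℤ) * hsv
  have hCB : (Int.gcd C (-B) : ℤ) ∣ A := by rwa [Int.gcd_neg, Int.gcd_comm]
  have hCv : IsCoprime C v :=
    isCoprime_of_gcd_dvd (v := s) (by linear_combination -hsv') hCB (by rwa [Int.gcd_comm])
  exact isTriangularChord_of_solution hA hB hs hv (isCoprime_of_gcd_dvd hsv' hAB hsN) hCv hsv'

theorem Int.gcd_gcd_eq_gcd_of_dvd {A B C : ℤ} (h : (Int.gcd A C : ℤ) ∣ B) :
    Int.gcd A (Int.gcd B C) = Int.gcd A C := by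
  rw [Int.gcd_left_comm, Int.gcd_comm]
  exact_mod_cast Int.gcd_eq_left (by positivity) h

/-- Characterization of triangular chords: a triple of positive
integers (A,B,C) is a triangular chord iff (1) the gcd of any two entries divides
the third, and (2) if n = gcd(A,B,C) is even then one of A/n, B/n, C/n is even. -/
theorem chord_characterization (A B C : ℤ) (hA : 0 < A) (hB : 0 < B) (hC : 0 < C) :
    IsTriangularChord A B C ↔
      (((Int.gcd A B : ℤ) ∣ C ∧ (Int.gcd B C : ℤ) ∣ A ∧ (Int.gcd A C : ℤ) ∣ B) ∧
        (2 ∣ (Int.gcd A (Int.gcd B C) : ℤ) →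
          2 ∣ A / (Int.gcd A (Int.gcd B C) : ℤ) ∨
          2 ∣ B / (Int.gcd A (Int.gcd B C) : ℤ) ∨
          2 ∣ C / (Int.gcd A (Int.gcd B C) : ℤ))) := by
  show IsTriangularChord A B C ↔ ChordConditions A B C
  constructor
  · rintro ⟨p, q, r, s, u, v, -, -, -, hpq, hrs, huv, -, -, hmul⟩
    exact of_multiset_triple_eq (P := ChordConditions) ChordConditions.swap₁₂
      ChordConditions.swap₂₃ hmul (chordConditions_of_fractions hpq hrs huv)
  · rintro ⟨⟨hAB, hBC, hAC⟩, hpar⟩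
    rw [Int.gcd_gcd_eq_gcd_of_dvd hAC] at hpar
    exact isTriangularChord_of_gcd_dvd hA hB hC hAB hBC hAC hpar
end

section
/- Ptolemy relation for Farey lambda lengths: let p/q, r/s, u/v, w/t be four distinct reduced fractions with p/q < r/s < u/v < w/t (vertices of an ideal quadrilateral in cyclic order). Define λ(a/b, c/d) = |ad - bc|. Then λ(p/q, u/v)·λ(r/s, w/t) = λ(p/q, r/s)·λ(u/v, w/t) + λ(r/s, u/v)·λ(p/q, w/t). -/
/-! For fractions in increasing order every determinant `a * d - b * c` occurring in the relation
is negative, so each absolute value is a signed `2 × 2` minor of the matrix with columns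
`(p, q), (r, s), (u, v), (w, t)`. The relation is then the three-term Plücker identity among
these minors. -/

theorem plucker_relation {R : Type*} [CommRing R] (p q r s u v w t : R) :
    (p * v - q * u) * (r * t - s * w)
      = (p * s - q * r) * (u * t - v * w) + (r * v - s * u) * (p * t - q * w) := by
  ring

theorem abs_mul_sub_mul_of_div_lt_div {a b c d : ℤ} (hb : 0 < b) (hd : 0 < d)
    (h : (a : ℚ) / b < (c : ℚ) / d) : |a * d - b * c| = -(a * d - b * c) := by
  rw [div_lt_div_iff₀ (by exact_mod_cast hb) (by exact_mod_cast hd)] at h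
  have h' : a * d < c * b := by exact_mod_cast h
  exact abs_of_neg (by linarith)

theorem farey_ptolemy_general
    (p q r s u v w t : ℤ) (hq : 0 < q) (hs : 0 < s) (hv : 0 < v) (ht : 0 < t)
    (h1 : (p : ℚ) / q < (r : ℚ) / s) (h2 : (r : ℚ) / s < (u : ℚ) / v)
    (h3 : (u : ℚ) / v < (w : ℚ) / t) :
    |p * v - q * u| * |r * t - s * w|
      = |p * s - q * r| * |u * t - v * w| + |r * v - s * u| * |p * t - q * w| := by
  rw [abs_mul_sub_mul_of_div_lt_div hq hv (h1.trans h2),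
    abs_mul_sub_mul_of_div_lt_div hs ht (h2.trans h3),
    abs_mul_sub_mul_of_div_lt_div hq hs h1, abs_mul_sub_mul_of_div_lt_div hv ht h3,
    abs_mul_sub_mul_of_div_lt_div hs hv h2,
    abs_mul_sub_mul_of_div_lt_div hq ht ((h1.trans h2).trans h3)]
  linear_combination plucker_relation p q r s u v w t

/-- Ptolemy relation for Farey lambda lengths λ(a/b, c/d) = |ad - bc|
on an ideal quadrilateral with vertices p/q < r/s < u/v < w/t:
λ(p/q,u/v)·λ(r/s,w/t) = λ(p/q,r/s)·λ(u/v,w/t) + λ(r/s,u/v)·λ(p/q,w/t). -/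
theorem farey_ptolemy
    (p q r s u v w t : ℤ) (hq : 0 < q) (hs : 0 < s) (hv : 0 < v) (ht : 0 < t)
    (hpq : IsCoprime p q) (hrs : IsCoprime r s) (huv : IsCoprime u v)
    (hwt : IsCoprime w t)
    (h1 : (p : ℚ) / q < (r : ℚ) / s) (h2 : (r : ℚ) / s < (u : ℚ) / v)
    (h3 : (u : ℚ) / v < (w : ℚ) / t) :
    |p * v - q * u| * |r * t - s * w|
      = |p * s - q * r| * |u * t - v * w| + |r * v - s * u| * |p * t - q * w| :=
  farey_ptolemy_general p q r s u v w t hq hs hv ht h1 h2 h3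
end
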